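/- Let $f_n, f : E \to \mathbb{R}$ be continuous functions on a compact set $E \subset \mathbb{R}^d$ with $f_n \to f$ uniformly, and suppose the set $\{t \in E : f(t) = 0\}$ has Lebesgue measure zero. Then $\int_E \mathbf{1}(f_n(t) > 0)\,dt \to \int_E \mathbf{1}(f(t) > 0)\,dt$ as $n \to \infty$. -/

import Mathlib

/-! The indicators `𝟙(fₙ t > 0)` are bounded by `1`, which is integrable on the compact set `E`,
and they converge to `𝟙(f t > 0)` at every `t ∈ E` with `f t ≠ 0`, since `𝟙(· > 0)` is continuous
away from its jump at `0`. By hypothesis this covers almost every point of `E`, so dominated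
convergence applies. -/

open MeasureTheory Filter Set Topology

theorem continuousAt_indicator_Ioi_zero_one {a : ℝ} (ha : a ≠ 0) :
    ContinuousAt ((Ioi 0).indicator fun _ => (1 : ℝ)) a :=
  continuousOn_const.continuousAt_indicator (by simpa [frontier_Ioi] using ha)

theorem tendsto_integral_indicator_pos_of_ae_tendsto {α ι : Type*} [MeasurableSpace α]
    {μ : Measure α} [IsFiniteMeasure μ] {l : Filter ι} [l.IsCountablyGenerated]
    {g : ι → α → ℝ} {f : α → ℝ} (hg : ∀ i, AEMeasurable (g i) μ)
    (hlim : ∀ᵐ x ∂μ, Tendsto (fun i => g i x) l (𝓝 (f x))) (hf : ∀ᵐ x ∂μ, f x ≠ 0) :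
    Tendsto (fun i => ∫ x, {x | 0 < g i x}.indicator (fun _ => (1 : ℝ)) x ∂μ) l
      (𝓝 (∫ x, {x | 0 < f x}.indicator (fun _ => (1 : ℝ)) x ∂μ)) := by
  have hstep : Measurable ((Ioi (0 : ℝ)).indicator fun _ => (1 : ℝ)) :=
    measurable_const.indicator measurableSet_Ioi
  refine tendsto_integral_filter_of_dominated_convergence (fun _ => 1)
    (.of_forall fun i => (hstep.comp_aemeasurable (hg i)).aestronglyMeasurable)
    (.of_forall fun i => .of_forall fun x => ?_) (integrable_const 1) ?_
  · exact norm_indicator_le_norm_self _ _ |>.trans_eq norm_one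
  · filter_upwards [hlim, hf] with x hx hfx
    exact (continuousAt_indicator_Ioi_zero_one hfx).tendsto.comp hx

theorem stmt_1_general {d : ℕ} (E : Set (Fin d → ℝ)) (hE : IsCompact E)
    (f : (Fin d → ℝ) → ℝ) (fn : ℕ → (Fin d → ℝ) → ℝ)
    (hfn : ∀ n, ContinuousOn (fn n) E)
    (hconv : TendstoUniformlyOn fn f atTop E)
    (hnull : volume {t ∈ E | f t = 0} = 0) :
    Tendsto (fun n => ∫ t in E, Set.indicator {t | 0 < fn n t} (fun _ => (1:ℝ)) t)
      atTop (nhds (∫ t in E, Set.indicator {t | 0 < f t} (fun _ => (1:ℝ)) t)) := by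
  have hEm : MeasurableSet E := hE.isClosed.measurableSet
  have : IsFiniteMeasure (volume.restrict E) :=
    ⟨by simpa using hE.measure_lt_top⟩
  have hf_ne : ∀ᵐ t ∂volume.restrict E, f t ≠ 0 := by
    refine (ae_restrict_iff' hEm).2 ?_
    filter_upwards [measure_eq_zero_iff_ae_notMem.1 hnull] with t ht htE hft
    exact ht ⟨htE, hft⟩
  refine tendsto_integral_indicator_pos_of_ae_tendsto
    (fun n => (hfn n).aemeasurable hEm) ?_ hf_ne
  filter_upwards [ae_restrict_mem hEm] with t ht using hconv.tendsto_at ht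

theorem stmt_1 {d : ℕ} (E : Set (Fin d → ℝ)) (hE : IsCompact E)
    (f : (Fin d → ℝ) → ℝ) (fn : ℕ → (Fin d → ℝ) → ℝ)
    (hf : ContinuousOn f E) (hfn : ∀ n, ContinuousOn (fn n) E)
    (hconv : TendstoUniformlyOn fn f atTop E)
    (hnull : volume {t ∈ E | f t = 0} = 0) :
    Tendsto (fun n => ∫ t in E, Set.indicator {t | 0 < fn n t} (fun _ => (1:ℝ)) t)
      atTop (nhds (∫ t in E, Set.indicator {t | 0 < f t} (fun _ => (1:ℝ)) t)) :=
  stmt_1_general E hE f fn hfn hconv hnull
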